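/- arXiv:1503.03325 — 3 statements merged into one kernel-verified Lean document; each statement's English description precedes it below -/
import Mathlib

section
/- Descent lemma: for all functions f, g : ℕ → ℕ and every natural number n, either D(I(n)) holds or Φ(I(n)) < Φ(n). -/
def Mini (f : ℕ → ℕ) : ℕ → ℕ
  | 0 => 0
  | n + 1 => if f (Mini f n) ≤ f (n + 1) then Mini f n else n + 1

def Psi (f g : ℕ → ℕ) (n : ℕ) : ℕ := max (f (Mini g n)) (g (Mini f n))

def Phi (f g : ℕ → ℕ) (n : ℕ) : ℕ := f (Mini f n) + g (Mini g n)

def I (f g : ℕ → ℕ) (n : ℕ) : ℕ := n + (Psi f g n) ^ 2 + 1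

def D (f g : ℕ → ℕ) (n : ℕ) : Prop :=
  ∃ i j, i < j ∧ j ≤ n ∧ f i ≤ f j ∧ g i ≤ g j

/-! If `Φ` does not drop from `n` to `N = I(n)`, the running minima of `f` and `g` keep their
argmins `a` and `b` up to `N`. For `n < k ≤ N` we have `a < k` and `f a ≤ f k`, so without `D`
also `g k < g a ≤ Ψ(n)`; symmetrically `f k < f b ≤ Ψ(n)`. Without `D` the pairs `(f k, g k)` are
moreover pairwise distinct, yet there are `Ψ(n)² + 1` of them in `[0, Ψ(n))²`. -/

open Finset

section Mini

variable (f : ℕ → ℕ)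

theorem Mini_le (n : ℕ) : Mini f n ≤ n := by
  induction n with
  | zero => rfl
  | succ n ih =>
    rw [Mini]
    split <;> omega

theorem apply_Mini_le {k n : ℕ} (hk : k ≤ n) : f (Mini f n) ≤ f k := by
  induction n with
  | zero => rw [Nat.le_zero.mp hk]; rfl
  | succ n ih =>
    rw [Mini]
    rcases hk.lt_or_eq with hk | rfl
    · split
      · exact ih (by omega)
      · exact (le_of_not_ge ‹_›).trans (ih (by omega))
    · split <;> simp_all

theorem apply_Mini_antitone : Antitone fun n => f (Mini f n) :=
  fun _ _ hmn => apply_Mini_le f ((Mini_le f _).trans hmn)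

theorem Mini_le_of_apply_le {k n : ℕ} (hk : k ≤ n) (hfk : f k ≤ f (Mini f n)) :
    Mini f n ≤ k := by
  induction n with
  | zero => simp [Mini]
  | succ n ih =>
    rw [Mini] at hfk ⊢
    rcases hk.lt_or_eq with hk | rfl
    · have hmin := apply_Mini_le f (Nat.le_of_lt_succ hk)
      by_cases hc : f (Mini f n) ≤ f (n + 1)
      · rw [if_pos hc] at hfk ⊢
        exact ih (by omega) hfk
      · rw [if_neg hc] at hfk ⊢
        omega
    · split
      · exact (Mini_le f n).trans (Nat.le_succ n)
      · rfl

theorem Mini_eq_of_apply_eq {m n : ℕ} (hmn : m ≤ n) (hv : f (Mini f n) = f (Mini f m)) :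
    Mini f n = Mini f m := by
  have hle : Mini f n ≤ Mini f m :=
    Mini_le_of_apply_le f ((Mini_le f m).trans hmn) hv.ge
  exact le_antisymm hle (Mini_le_of_apply_le f (hle.trans (Mini_le f m)) hv.le)

end Mini

section Descent

variable {f g : ℕ → ℕ}

theorem D_comm {n : ℕ} : D f g n ↔ D g f n := by
  simp only [D, and_comm (a := f _ ≤ f _)]

theorem Psi_comm (n : ℕ) : Psi f g n = Psi g f n := max_comm _ _

theorem Phi_comm (n : ℕ) : Phi f g n = Phi g f n := add_comm _ _

theorem lt_of_not_D {N i j : ℕ} (hD : ¬ D f g N) (hij : i < j) (hjN : j ≤ N)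
    (hf : f i ≤ f j) : g j < g i :=
  lt_of_not_ge fun hg => hD ⟨i, j, hij, hjN, hf, hg⟩

theorem Mini_eq_of_Phi_le {n N : ℕ} (hnN : n ≤ N) (hPhi : Phi f g n ≤ Phi f g N) :
    Mini f N = Mini f n := by
  have hf := apply_Mini_antitone f hnN
  have hg := apply_Mini_antitone g hnN
  simp only [Phi] at hPhi hf hg
  exact Mini_eq_of_apply_eq f hnN (by omega)

theorem apply_lt_Psi_of_not_D {n N k : ℕ} (hD : ¬ D f g N) (hMini : Mini f N = Mini f n)
    (hnk : n < k) (hkN : k ≤ N) : g k < Psi f g n := by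
  have hfk : f (Mini f n) ≤ f k := hMini ▸ apply_Mini_le f hkN
  exact (lt_of_not_D hD ((Mini_le f n).trans_lt hnk) hkN hfk).trans_le (le_max_right _ _)

theorem D_of_forall_lt {n N P : ℕ} (hN : n + P ^ 2 < N)
    (hbound : ∀ k ∈ Ioc n N, f k < P ∧ g k < P) : D f g N := by
  have hmaps : Set.MapsTo (fun k => (f k, g k)) (Ioc n N) ↑(range P ×ˢ range P) := by
    intro k hk
    simpa using hbound k hk
  have hcard : #(range P ×ˢ range P) < #(Ioc n N) := by
    simp only [card_product, card_range, Nat.card_Ioc, ← sq]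
    omega
  obtain ⟨i, hi, j, hj, hij, hpair⟩ := exists_ne_map_eq_of_card_lt_of_maps_to hcard hmaps
  simp only [Prod.mk.injEq] at hpair
  rw [mem_Ioc] at hi hj
  rcases hij.lt_or_gt with hij | hij
  · exact ⟨i, j, hij, hj.2, hpair.1.le, hpair.2.le⟩
  · exact ⟨j, i, hij, hi.2, hpair.1.ge, hpair.2.ge⟩

end Descent

theorem descent (f g : ℕ → ℕ) (n : ℕ) :
    D f g (I f g n) ∨ Phi f g (I f g n) < Phi f g n := by
  rw [or_iff_not_imp_right, not_lt]
  intro hPhi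
  by_contra hD
  have hnN : n ≤ I f g n := by unfold I; omega
  have hMf : Mini f (I f g n) = Mini f n := Mini_eq_of_Phi_le hnN hPhi
  have hMg : Mini g (I f g n) = Mini g n :=
    Mini_eq_of_Phi_le hnN (by rwa [Phi_comm, Phi_comm (I f g n)] at hPhi)
  refine hD (D_of_forall_lt (n := n) (P := Psi f g n) (by unfold I; omega) fun k hk => ?_)
  rw [mem_Ioc] at hk
  refine ⟨?_, apply_lt_Psi_of_not_D hD hMf hk.1 hk.2⟩
  rw [Psi_comm]
  exact apply_lt_Psi_of_not_D (D_comm.not.mp hD) hMg hk.1 hk.2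
end

section
/- Iterated descent: for all functions f, g : ℕ → ℕ and every natural number n, either D(Iⁿ(0)) holds or Φ(Iⁿ(0)) + n ≤ Φ(0), where Iⁿ denotes the n-fold iterate of I (I⁰(m) = m, I^{n+1}(m) = I(Iⁿ(m))). -/
lemma mini_le (f : ℕ → ℕ) (n : ℕ) : Mini f n ≤ n := by
  induction n with
  | zero => simp [Mini]
  | succ n ih =>
    rw [Mini]
    split
    · omega
    · omega

lemma mini_min (f : ℕ → ℕ) : ∀ n k, k ≤ n → f (Mini f n) ≤ f k := by
  intro n
  induction n with
  | zero => intro k hk; interval_cases k; simp [Mini]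
  | succ n ih =>
    intro k hk
    rw [Mini]
    split
    case isTrue hc =>
      rcases eq_or_lt_of_le hk with h | h
      · subst h; exact hc
      · exact ih k (Nat.lt_succ_iff.mp h)
    case isFalse hc =>
      rcases eq_or_lt_of_le hk with h | h
      · subst h; exact le_rfl
      · exact le_trans (le_of_not_ge hc) (ih k (Nat.lt_succ_iff.mp h))

lemma mini_val_mono (f : ℕ → ℕ) {m n : ℕ} (h : m ≤ n) :
    f (Mini f n) ≤ f (Mini f m) :=
  mini_min f n _ (le_trans (mini_le f m) h)

lemma mini_idx_eq (f : ℕ → ℕ) {m n : ℕ} (h : m ≤ n)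
    (hv : f (Mini f n) = f (Mini f m)) : Mini f n = Mini f m := by
  induction n, h using Nat.le_induction with
  | base => rfl
  | succ n hmn ih =>
    by_cases hc : f (Mini f n) ≤ f (n + 1)
    · rw [Mini, if_pos hc] at hv ⊢
      exact ih hv
    · rw [Mini, if_neg hc] at hv
      have h1 := mini_val_mono f hmn
      omega

lemma phi_mono (f g : ℕ → ℕ) {m n : ℕ} (h : m ≤ n) :
    Phi f g n ≤ Phi f g m :=
  Nat.add_le_add (mini_val_mono f h) (mini_val_mono g h)

lemma key (f g : ℕ → ℕ) (m : ℕ) :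
    D f g (I f g m) ∨ Phi f g (I f g m) < Phi f g m := by
  by_cases hD : D f g (I f g m)
  · exact Or.inl hD
  right
  set m' := I f g m with hm'
  have hmm' : m ≤ m' := by simp [hm', I]; omega
  have hΦ : Phi f g m' ≤ Phi f g m := phi_mono f g hmm'
  rcases lt_or_eq_of_le hΦ with h | h
  · exact h
  exfalso
  -- both minimum values are unchanged
  have hf : f (Mini f m') = f (Mini f m) := by
    have h1 := mini_val_mono f hmm'
    have h2 := mini_val_mono g hmm'
    simp only [Phi] at h
    omega
  have hg : g (Mini g m') = g (Mini g m) := by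
    have h1 := mini_val_mono f hmm'
    simp only [Phi] at h
    omega
  have hfi : Mini f m' = Mini f m := mini_idx_eq f hmm' hf
  have hgi : Mini g m' = Mini g m := mini_idx_eq g hmm' hg
  set P := Psi f g m with hP
  -- each k in (m, m'] has f k < P and g k < P
  have hbound : ∀ k ∈ Finset.Ioc m m', f k < P ∧ g k < P := by
    intro k hk
    simp only [Finset.mem_Ioc] at hk
    have hfk : f (Mini f m) ≤ f k := hf ▸ mini_min f m' k hk.2
    have hgk : g (Mini g m) ≤ g k := hg ▸ mini_min g m' k hk.2
    have h1 : ¬ (g k ≥ g (Mini f m)) := by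
      intro hge
      exact hD ⟨Mini f m, k, lt_of_le_of_lt (mini_le f m) hk.1, hk.2, hfk, hge⟩
    have h2 : ¬ (f k ≥ f (Mini g m)) := by
      intro hge
      exact hD ⟨Mini g m, k, lt_of_le_of_lt (mini_le g m) hk.1, hk.2, hge, hgk⟩
    constructor
    · exact lt_of_lt_of_le (by omega) (le_max_left _ _)
    · exact lt_of_lt_of_le (by omega) (le_max_right _ _)
  -- pigeonhole
  have hcard : ((Finset.range P) ×ˢ (Finset.range P)).card < (Finset.Ioc m m').card := by
    rw [Finset.card_product, Finset.card_range, Nat.card_Ioc]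
    have : m' - m = P ^ 2 + 1 := by rw [hm', hP]; simp only [I]; omega
    rw [this]
    nlinarith
  have hmaps : ∀ k ∈ Finset.Ioc m m', (f k, g k) ∈ (Finset.range P) ×ˢ (Finset.range P) := by
    intro k hk
    obtain ⟨h1, h2⟩ := hbound k hk
    simp [Finset.mem_product, h1, h2]
  obtain ⟨i, hi, j, hj, hne, heq⟩ :=
    Finset.exists_ne_map_eq_of_card_lt_of_maps_to hcard hmaps
  simp only [Finset.mem_Ioc] at hi hj
  have heq' : f i = f j ∧ g i = g j := by
    have := Prod.mk.injEq (f i) (g i) (f j) (g j) ▸ heq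
    exact Prod.mk.inj heq
  rcases lt_or_gt_of_ne hne with hlt | hgt
  · exact hD ⟨i, j, hlt, hj.2, le_of_eq heq'.1, le_of_eq heq'.2⟩
  · exact hD ⟨j, i, hgt, hi.2, le_of_eq heq'.1.symm, le_of_eq heq'.2.symm⟩

lemma D_mono (f g : ℕ → ℕ) {m n : ℕ} (h : m ≤ n) (hd : D f g m) : D f g n := by
  obtain ⟨i, j, h1, h2, h3, h4⟩ := hd
  exact ⟨i, j, h1, le_trans h2 h, h3, h4⟩

theorem iterated_descent (f g : ℕ → ℕ) (n : ℕ) :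
    D f g ((I f g)^[n] 0) ∨ Phi f g ((I f g)^[n] 0) + n ≤ Phi f g 0 := by
  induction n with
  | zero => right; simp
  | succ n ih =>
    rw [Function.iterate_succ_apply']
    have hle : (I f g)^[n] 0 ≤ I f g ((I f g)^[n] 0) := by simp [I]; omega
    rcases ih with hd | hphi
    · exact Or.inl (D_mono f g hle hd)
    · rcases key f g ((I f g)^[n] 0) with hd | hlt
      · exact Or.inl hd
      · right; omega
end

section
/- Bound for Dickson's lemma above any starting point: for all functions f, g : ℕ → ℕ and every natural number n, there exists a natural number k with I(n) ≤ k and D(k). -/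
lemma eventually_min (f : ℕ → ℕ) (N : ℕ) :
    ∃ m, N ≤ m ∧ ∀ j, m ≤ j → f m ≤ f j := by
  classical
  have hne : ∃ v, ∃ m, N ≤ m ∧ f m = v := ⟨f N, N, le_refl N, rfl⟩
  obtain ⟨m, hm, hfm⟩ := Nat.find_spec hne
  refine ⟨m, hm, fun j hj => ?_⟩
  rw [hfm]
  exact Nat.find_min' hne ⟨j, le_trans hm hj, rfl⟩

theorem bound_above (f g : ℕ → ℕ) (n : ℕ) :
    ∃ k, I f g n ≤ k ∧ D f g k := by
  classical
  set N := I f g n with hN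
  have hne : ∃ v, ∃ i, N ≤ i ∧ (∀ j, i ≤ j → f i ≤ f j) ∧ g i = v := by
    obtain ⟨m, hm, hmin⟩ := eventually_min f N
    exact ⟨g m, m, hm, hmin, rfl⟩
  obtain ⟨i, hiN, hfi, hgi⟩ := Nat.find_spec hne
  obtain ⟨j, hj, hfj⟩ := eventually_min f (i + 1)
  have hij : i < j := hj
  have hgij : g i ≤ g j := by
    rw [hgi]
    exact Nat.find_min' hne ⟨j, le_trans hiN (le_of_lt hij), hfj, rfl⟩
  exact ⟨j, le_trans (le_of_lt hij) (le_refl j) |>.trans' hiN, i, j, hij, le_refl j,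
    hfi j (le_of_lt hij), hgij⟩
end
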